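/- Let $N, D$ be natural numbers with $1 \le D < N$, let $L > 0$, let $k^- < 0$ with $|k^-| \ne D/(N-D)$, and set $k_j = 1$ for $1 \le j \le D$ and $k_j = k^-$ for $D+1 \le j \le N$. Then for every tuple of continuous functions $f_j : [0,L] \to \mathbb{R}$ ($1 \le j \le N$) there exists a unique tuple $(\psi_1,\dots,\psi_N)$ of twice continuously differentiable functions $\psi_j : [0,L] \to \mathbb{R}$ satisfying: $-k_j \psi_j''(x) = f_j(x)$ for all $x \in [0,L]$ and all $j$; the Dirichlet conditions $\psi_j(0) = 0$ for all $j$; the continuity conditions $\psi_1(L) = \psi_2(L) = \cdots = \psi_N(L)$; and the Kirchhoff condition $\sum_{j=1}^{N} k_j \psi_j'(L) = 0$. -/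

import Mathlib

/-!
On each edge, `-k_j ψ_j'' = f_j` with `ψ_j 0 = 0` determines `ψ_j` up to adding a linear
function `s_j x`. Continuity at the junction expresses every slope `s_j` through the common
junction value `c`, and the Kirchhoff condition then becomes the single scalar equation
`(∑ k_j) c = …`. It is uniquely solvable exactly when `∑ k_j = D + (N - D) k⁻ ≠ 0`, which is
the non-resonance condition `|k⁻| ≠ D / (N - D)`.
-/

/-- The predicate saying that `ψ = (ψ_1, …, ψ_N)` is a classical solution of the
star-network problem with `N` edges of equal length `L`, conductivities `k j`,
source terms `f j`, Dirichlet conditions at the external vertices `x = 0`,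
and continuity plus Kirchhoff conditions at the internal vertex `x = L`. -/
def IsStarSolution (N : ℕ) (L : ℝ) (k : ℕ → ℝ) (f : ℕ → ℝ → ℝ) (ψ : ℕ → ℝ → ℝ) : Prop :=
  (∀ j ∈ Finset.Icc 1 N, ContDiffOn ℝ 2 (ψ j) (Set.Icc 0 L)) ∧
  (∀ j ∈ Finset.Icc 1 N, ∀ x ∈ Set.Icc 0 L,
      -(k j * iteratedDerivWithin 2 (ψ j) (Set.Icc 0 L) x) = f j x) ∧
  (∀ j ∈ Finset.Icc 1 N, ψ j 0 = 0) ∧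
  (∀ j ∈ Finset.Icc 1 N, ψ j L = ψ 1 L) ∧
  (∑ j ∈ Finset.Icc 1 N, k j * derivWithin (ψ j) (Set.Icc 0 L) L = 0)

open Set

section IteratedDeriv

variable {𝕜 F : Type*} [NontriviallyNormedField 𝕜] [NormedAddCommGroup F] [NormedSpace 𝕜 F]
  {f f' f'' : 𝕜 → F}

theorem contDiff_two_of_hasDerivAt (hf : ∀ x, HasDerivAt f (f' x) x)
    (hf' : ∀ x, HasDerivAt f' (f'' x) x) (hf'' : Continuous f'') : ContDiff 𝕜 2 f := by
  have hderiv : deriv f = f' := funext fun x => (hf x).deriv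
  have hderiv' : deriv f' = f'' := funext fun x => (hf' x).deriv
  rw [show (2 : WithTop ℕ∞) = 1 + 1 from rfl, contDiff_succ_iff_deriv, hderiv,
    contDiff_one_iff_deriv, hderiv']
  exact ⟨fun x => (hf x).differentiableAt, by simp, fun x => (hf' x).differentiableAt, hf''⟩

theorem iteratedDerivWithin_two_eq_of_hasDerivAt {s : Set 𝕜} (hs : UniqueDiffOn 𝕜 s)
    (hf : ∀ x, HasDerivAt f (f' x) x) (hf' : ∀ x, HasDerivAt f' (f'' x) x) {x : 𝕜}
    (hx : x ∈ s) : iteratedDerivWithin 2 f s x = f'' x := by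
  have hderiv : EqOn (iteratedDerivWithin 1 f s) f' s := fun y hy => by
    rw [iteratedDerivWithin_one]; exact (hf y).hasDerivWithinAt.derivWithin (hs y hy)
  rw [iteratedDerivWithin_succ, derivWithin_congr hderiv (hderiv hx)]
  exact (hf' x).hasDerivWithinAt.derivWithin (hs x hx)

end IteratedDeriv

theorem Continuous.exists_second_antiderivative {g : ℝ → ℝ} (hg : Continuous g) :
    ∃ P P' : ℝ → ℝ, P 0 = 0 ∧ ∀ x, HasDerivAt P (P' x) x ∧ HasDerivAt P' (g x) x := by
  have hG : ∀ x, HasDerivAt (fun y => ∫ t in (0 : ℝ)..y, g t) (g x) x := fun x =>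
    (hg.integral_hasStrictDerivAt 0 x).hasDerivAt
  have hGc : Continuous fun y => ∫ t in (0 : ℝ)..y, g t :=
    continuous_iff_continuousAt.2 fun x => (hG x).continuousAt
  exact ⟨fun x => ∫ t in (0 : ℝ)..x, ∫ u in (0 : ℝ)..t, g u, _,
    intervalIntegral.integral_same, fun x => ⟨(hGc.integral_hasStrictDerivAt 0 x).hasDerivAt, hG x⟩⟩

section Interval

variable {a b : ℝ} {f : ℝ → ℝ}

theorem derivWithin_Icc_eq_of_iteratedDerivWithin_two_eq_zero (hab : a < b)
    (hf : ContDiffOn ℝ 2 f (Icc a b))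
    (h : ∀ x ∈ Icc a b, iteratedDerivWithin 2 f (Icc a b) x = 0) :
    ∀ x ∈ Icc a b, derivWithin f (Icc a b) x = derivWithin f (Icc a b) a := by
  have hf' := ((contDiffOn_succ_iff_derivWithin (n := 1) (uniqueDiffOn_Icc hab)).1 hf).2.2
  refine constant_of_derivWithin_zero (hf'.differentiableOn one_ne_zero) fun x hx => ?_
  rw [← h x (Ico_subset_Icc_self hx), iteratedDerivWithin_succ, iteratedDerivWithin_one]

theorem eq_add_mul_of_iteratedDerivWithin_two_eq_zero (hab : a < b)
    (hf : ContDiffOn ℝ 2 f (Icc a b))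
    (h : ∀ x ∈ Icc a b, iteratedDerivWithin 2 f (Icc a b) x = 0) :
    ∀ x ∈ Icc a b, f x = f a + derivWithin f (Icc a b) a * (x - a) := by
  set c := derivWithin f (Icc a b) a
  have hd : DifferentiableOn ℝ f (Icc a b) := hf.differentiableOn two_ne_zero
  have hline : ∀ x, HasDerivAt (fun x => c * (x - a)) c x := fun x => by
    simpa using ((hasDerivAt_id x).sub_const a).const_mul c
  have hconst := constant_of_derivWithin_zero (f := fun x => f x - c * (x - a))
    (hd.sub fun x _ => (hline x).differentiableAt.differentiableWithinAt) fun x hx => by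
      have hx' := Ico_subset_Icc_self hx
      rw [((hd x hx').hasDerivWithinAt.fun_sub (hline x).hasDerivWithinAt).derivWithin
        (uniqueDiffOn_Icc hab x hx'),
        derivWithin_Icc_eq_of_iteratedDerivWithin_two_eq_zero hab hf h x hx', sub_self]
  intro x hx
  linarith [hconst x hx, show c * (a - a) = 0 by ring]

end Interval

theorem exists_add_mul_eq_and_sum_mul_add_eq_zero {ι K : Type*} [Field K] {t : Finset ι}
    {k : ι → K} (hS : ∑ j ∈ t, k j ≠ 0) {L : K} (hL : L ≠ 0) (v w : ι → K) :
    ∃ c : K, ∃ s : ι → K, (∀ j, v j + s j * L = c) ∧ ∑ j ∈ t, k j * (w j + s j) = 0 := by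
  set S := ∑ j ∈ t, k j
  set c := (∑ j ∈ t, k j * (v j - L * w j)) / S
  refine ⟨c, fun j => (c - v j) / L, fun j => by rw [div_mul_cancel₀ _ hL, add_sub_cancel], ?_⟩
  have hsum : ∑ j ∈ t, k j * (w j + (c - v j) / L) = (c * S - ∑ j ∈ t, k j * (v j - L * w j)) / L := by
    rw [eq_div_iff hL, Finset.sum_mul, Finset.mul_sum, ← Finset.sum_sub_distrib]
    refine Finset.sum_congr rfl fun j _ => ?_
    field_simp
    ring
  rw [hsum, div_mul_cancel₀ _ hS, sub_self, zero_div]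

theorem ContinuousOn.exists_hasDerivAt_two_eqOn {a b : ℝ} (hab : a ≤ b) {g : ℝ → ℝ}
    (hg : ContinuousOn g (Icc a b)) :
    ∃ P P' P'' : ℝ → ℝ, Continuous P'' ∧ EqOn P'' g (Icc a b) ∧ P 0 = 0 ∧
      ∀ x, HasDerivAt P (P' x) x ∧ HasDerivAt P' (P'' x) x := by
  have hext : Continuous (IccExtend hab ((Icc a b).domRestrict g)) :=
    continuous_IccExtend_iff.2 (continuousOn_iff_continuous_domRestrict.1 hg)
  obtain ⟨P, P', hP0, hP⟩ := hext.exists_second_antiderivative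
  exact ⟨P, P', _, hext, fun x hx => IccExtend_of_mem hab _ hx, hP0, hP⟩

theorem Finset.sum_Icc_eq_of_two_phase {N D : ℕ} (hDN : D ≤ N) {k : ℕ → ℝ} {a b : ℝ}
    (hka : ∀ j, 1 ≤ j → j ≤ D → k j = a) (hkb : ∀ j, D < j → j ≤ N → k j = b) :
    ∑ j ∈ Finset.Icc 1 N, k j = D * a + (N - D) * b := by
  have ha : ∑ j ∈ Finset.Ioc 0 D, k j = D * a := by
    rw [Finset.sum_congr rfl fun j hj => hka j (Finset.mem_Ioc.1 hj).1 (Finset.mem_Ioc.1 hj).2]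
    simp
  have hb : ∑ j ∈ Finset.Ioc D N, k j = (N - D) * b := by
    rw [Finset.sum_congr rfl fun j hj => hkb j (Finset.mem_Ioc.1 hj).1 (Finset.mem_Ioc.1 hj).2]
    simp [Nat.cast_sub hDN]
  rw [show Finset.Icc 1 N = Finset.Ioc 0 N from Finset.Icc_add_one_left_eq_Ioc 0 N, ← Finset.sum_Ioc_consecutive _ D.zero_le hDN, ha, hb]

namespace IsStarSolution

variable {N : ℕ} {L : ℝ} {k : ℕ → ℝ} {f : ℕ → ℝ → ℝ} {φ ψ : ℕ → ℝ → ℝ}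

theorem sub (hL : 0 < L) (hφ : IsStarSolution N L k f φ) (hψ : IsStarSolution N L k f ψ) :
    IsStarSolution N L k 0 (φ - ψ) := by
  obtain ⟨hφC, hφE, hφ0, hφL, hφK⟩ := hφ
  obtain ⟨hψC, hψE, hψ0, hψL, hψK⟩ := hψ
  have hs := uniqueDiffOn_Icc hL
  have hL' : L ∈ Icc 0 L := right_mem_Icc.2 hL.le
  refine ⟨fun j hj => (hφC j hj).sub (hψC j hj), fun j hj x hx => ?_,
    fun j hj => by simp [hφ0 j hj, hψ0 j hj], fun j hj => by simp [hφL j hj, hψL j hj], ?_⟩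
  · rw [Pi.sub_apply, iteratedDerivWithin_sub hx hs (hφC j hj x hx) (hψC j hj x hx)]
    linarith [hφE j hj x hx, hψE j hj x hx, show (0 : ℕ → ℝ → ℝ) j x = 0 from rfl]
  · have hderiv : ∀ j ∈ Finset.Icc 1 N, k j * derivWithin ((φ - ψ) j) (Icc 0 L) L =
        k j * derivWithin (φ j) (Icc 0 L) L - k j * derivWithin (ψ j) (Icc 0 L) L := fun j hj => by
      rw [Pi.sub_apply, derivWithin_sub ((hφC j hj).differentiableOn two_ne_zero L hL')
        ((hψC j hj).differentiableOn two_ne_zero L hL'), mul_sub]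
    rw [Finset.sum_congr rfl hderiv, Finset.sum_sub_distrib, hφK, hψK, sub_zero]

theorem eqOn_zero (hL : 0 < L) (hk : ∀ j ∈ Finset.Icc 1 N, k j ≠ 0)
    (hS : ∑ j ∈ Finset.Icc 1 N, k j ≠ 0) (hψ : IsStarSolution N L k 0 ψ) :
    ∀ j ∈ Finset.Icc 1 N, EqOn (ψ j) 0 (Icc 0 L) := by
  obtain ⟨hC, hE, h0, hcont, hK⟩ := hψ
  set s : ℕ → ℝ := fun j => derivWithin (ψ j) (Icc 0 L) 0
  have hflat : ∀ j ∈ Finset.Icc 1 N, ∀ x ∈ Icc 0 L,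
      iteratedDerivWithin 2 (ψ j) (Icc 0 L) x = 0 := fun j hj x hx => by
    simpa [hk j hj] using hE j hj x hx
  have hlin : ∀ j ∈ Finset.Icc 1 N, ∀ x ∈ Icc 0 L, ψ j x = s j * x := fun j hj x hx => by
    simpa [h0 j hj] using eq_add_mul_of_iteratedDerivWithin_two_eq_zero hL (hC j hj) (hflat j hj) x hx
  have hL' : L ∈ Icc 0 L := right_mem_Icc.2 hL.le
  have h1 : 1 ∈ Finset.Icc 1 N := by
    obtain ⟨i, hi, -⟩ := Finset.exists_ne_zero_of_sum_ne_zero hS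
    simp only [Finset.mem_Icc] at hi ⊢
    omega
  have hslope : ∀ j ∈ Finset.Icc 1 N, s j = s 1 := fun j hj =>
    mul_right_cancel₀ hL.ne' (by rw [← hlin j hj L hL', ← hlin 1 h1 L hL', hcont j hj])
  have hslopeL : ∀ j ∈ Finset.Icc 1 N, derivWithin (ψ j) (Icc 0 L) L = s 1 := fun j hj =>
    (derivWithin_Icc_eq_of_iteratedDerivWithin_two_eq_zero hL (hC j hj) (hflat j hj) L hL').trans
      (hslope j hj)
  have hs1 : s 1 = 0 := by
    rw [Finset.sum_congr rfl fun j hj => by rw [hslopeL j hj], ← Finset.sum_mul] at hK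
    exact (mul_eq_zero.1 hK).resolve_left hS
  intro j hj x hx
  rw [hlin j hj x hx, hslope j hj, hs1, zero_mul, Pi.zero_apply]

theorem eqOn (hL : 0 < L) (hk : ∀ j ∈ Finset.Icc 1 N, k j ≠ 0)
    (hS : ∑ j ∈ Finset.Icc 1 N, k j ≠ 0) (hφ : IsStarSolution N L k f φ)
    (hψ : IsStarSolution N L k f ψ) : ∀ j ∈ Finset.Icc 1 N, EqOn (φ j) (ψ j) (Icc 0 L) :=
  fun j hj _ hx => sub_eq_zero.1 ((hφ.sub hL hψ).eqOn_zero hL hk hS j hj hx)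

end IsStarSolution

theorem exists_isStarSolution {N : ℕ} {L : ℝ} (hL : 0 < L) {k : ℕ → ℝ}
    (hk : ∀ j ∈ Finset.Icc 1 N, k j ≠ 0) (hS : ∑ j ∈ Finset.Icc 1 N, k j ≠ 0) {f : ℕ → ℝ → ℝ}
    (hf : ∀ j ∈ Finset.Icc 1 N, ContinuousOn (f j) (Icc 0 L)) :
    ∃ ψ : ℕ → ℝ → ℝ, IsStarSolution N L k f ψ := by
  have hedge : ∀ j ∈ Finset.Icc 1 N, ∃ P P' P'' : ℝ → ℝ, Continuous P'' ∧
      EqOn P'' (fun x => -f j x / k j) (Icc 0 L) ∧ P 0 = 0 ∧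
      ∀ x, HasDerivAt P (P' x) x ∧ HasDerivAt P' (P'' x) x := fun j hj =>
    ((hf j hj).neg.div_const (k j)).exists_hasDerivAt_two_eqOn hL.le
  choose! P P' P'' hP''c hP''eq hP0 hP using hedge
  obtain ⟨c, s, hsL, hsK⟩ := exists_add_mul_eq_and_sum_mul_add_eq_zero hS hL.ne'
    (fun j => P j L) (fun j => P' j L)
  have hψ : ∀ j ∈ Finset.Icc 1 N, ∀ x,
      HasDerivAt (fun x => P j x + s j * x) (P' j x + s j) x ∧
      HasDerivAt (fun x => P' j x + s j) (P'' j x) x := fun j hj x =>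
    ⟨by simpa using (hP j hj x).1.fun_add ((hasDerivAt_id x).const_mul (s j)),
      (hP j hj x).2.add_const (s j)⟩
  have hs := uniqueDiffOn_Icc hL
  refine ⟨fun j x => P j x + s j * x, fun j hj =>
    (contDiff_two_of_hasDerivAt (hψ j hj · |>.1) (hψ j hj · |>.2) (hP''c j hj)).contDiffOn,
    fun j hj x hx => ?_, fun j hj => by simp [hP0 j hj], fun j _ => by simp only [hsL], ?_⟩
  · rw [iteratedDerivWithin_two_eq_of_hasDerivAt hs (hψ j hj · |>.1) (hψ j hj · |>.2) hx,
      hP''eq j hj hx]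
    field_simp [hk j hj]
  · refine (Finset.sum_congr rfl fun j hj => ?_).trans hsK
    rw [((hψ j hj L).1.hasDerivWithinAt.derivWithin (hs L (right_mem_Icc.2 hL.le)))]

theorem stmt_2 (N D : ℕ) (hDN : D < N) (L : ℝ) (hL : 0 < L)
    (kneg : ℝ) (hkneg : kneg < 0)
    (hres : |kneg| ≠ (D : ℝ) / ((N : ℝ) - (D : ℝ)))
    (k : ℕ → ℝ)
    (hk1 : ∀ j, 1 ≤ j → j ≤ D → k j = 1)
    (hk2 : ∀ j, D < j → j ≤ N → k j = kneg)
    (f : ℕ → ℝ → ℝ) (hf : ∀ j ∈ Finset.Icc 1 N, ContinuousOn (f j) (Set.Icc 0 L)) :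
    ∃ ψ : ℕ → ℝ → ℝ, IsStarSolution N L k f ψ ∧
      ∀ φ : ℕ → ℝ → ℝ, IsStarSolution N L k f φ →
        ∀ j ∈ Finset.Icc 1 N, ∀ x ∈ Set.Icc (0 : ℝ) L, φ j x = ψ j x := by
  have hk : ∀ j ∈ Finset.Icc 1 N, k j ≠ 0 := fun j hj => by
    obtain ⟨hj1, hjN⟩ := Finset.mem_Icc.1 hj
    rcases le_or_gt j D with hjD | hjD
    · rw [hk1 j hj1 hjD]; exact one_ne_zero
    · rw [hk2 j hjD hjN]; exact hkneg.ne
  have hS : ∑ j ∈ Finset.Icc 1 N, k j ≠ 0 := by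
    have hND : (0 : ℝ) < N - D := sub_pos.2 (Nat.cast_lt.2 hDN)
    rw [Finset.sum_Icc_eq_of_two_phase hDN.le hk1 hk2]
    intro hzero
    refine hres ?_
    rw [abs_of_neg hkneg, eq_div_iff hND.ne']
    linarith
  obtain ⟨ψ, hψ⟩ := exists_isStarSolution hL hk hS hf
  exact ⟨ψ, hψ, fun φ hφ j hj _ hx => hφ.eqOn hL hk hS hψ j hj hx⟩
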